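/- Let R be a Γ-graded ring (Γ not assumed abelian), n ≥ 1, γ : Fin n → Γ, δ ∈ Γ, and let u ∈ 𝒜 δ be a unit of R. Define γ' : Fin n → Γ by γ' 0 = γ 0 + δ and γ' i = γ i for i ≠ 0. Then there is a ring automorphism Φ of Matrix (Fin n) (Fin n) R such that for every d ∈ Γ and every matrix A, A is homogeneous of degree d with respect to γ if and only if Φ(A) is homogeneous of degree d with respect to γ'; in other words, M_n(R)(γ) and M_n(R)(γ') are graded isomorphic. -/
import Mathlib


/-- A matrix `A` is homogeneous of degree `d` with respect to the shift vector `γ` if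
`A i j ∈ 𝒜 (-(γ i) + d + γ j)` for all `i, j`.  These components define the `Γ`-graded
matrix ring `Mₙ(R)(γ)`. -/
def MatrixGradedHomogeneous {Γ R : Type*} [AddGroup Γ] [Ring R]
    (𝒜 : Γ → AddSubgroup R) {n : ℕ} (γ : Fin n → Γ) (d : Γ)
    (A : Matrix (Fin n) (Fin n) R) : Prop :=
  ∀ i j : Fin n, A i j ∈ 𝒜 (-(γ i) + d + γ j)

/-- The inverse of a homogeneous unit is homogeneous. -/
lemma inv_mem_of_homogeneous_unit {Γ R : Type*} [AddGroup Γ] [DecidableEq Γ] [Ring R]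
    (𝒜 : Γ → AddSubgroup R) [GradedRing 𝒜] {δ : Γ} {u v : R}
    (hu : u ∈ 𝒜 δ) (huv : u * v = 1) (hvu : v * u = 1) : v ∈ 𝒜 (-δ) := by
  set w : R := (DirectSum.decompose 𝒜 v (-δ) : R) with hw
  have h1 : u * w = 1 := by
    have := DirectSum.coe_decompose_mul_add_of_left_mem (j := -δ) 𝒜 hu (b := v)
    rw [huv, add_neg_cancel] at this
    rw [← this, DirectSum.decompose_of_mem_same 𝒜 (SetLike.one_mem_graded 𝒜)]
  have h2 : w * u = 1 := by
    have := DirectSum.coe_decompose_mul_add_of_right_mem (i := -δ) 𝒜 hu (a := v)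
    rw [hvu, neg_add_cancel] at this
    rw [← this, DirectSum.decompose_of_mem_same 𝒜 (SetLike.one_mem_graded 𝒜)]
  have hv : v = w := by
    calc v = (w * u) * v := by rw [h2, one_mul]
    _ = w * (u * v) := by rw [mul_assoc]
    _ = w := by rw [huv, mul_one]
  rw [hv]
  exact SetLike.coe_mem _

lemma aux_conj {Γ R : Type*} [AddGroup Γ] [DecidableEq Γ] [Ring R]
    (𝒜 : Γ → AddSubgroup R) [GradedRing 𝒜]
    {n : ℕ} (hn : 1 ≤ n) (γ γ' : Fin n → Γ) (δ : Γ) (a b : R)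
    (ha : a ∈ 𝒜 (-δ)) (hb : b ∈ 𝒜 δ)
    (h0 : γ' ⟨0, hn⟩ = γ ⟨0, hn⟩ + δ)
    (hi : ∀ i : Fin n, i ≠ ⟨0, hn⟩ → γ' i = γ i)
    (d : Γ) (A : Matrix (Fin n) (Fin n) R)
    (hA : MatrixGradedHomogeneous 𝒜 γ d A) :
    MatrixGradedHomogeneous 𝒜 γ' d
      (Matrix.diagonal (fun i => if i = ⟨0, hn⟩ then a else 1) * A *
       Matrix.diagonal (fun i => if i = ⟨0, hn⟩ then b else 1)) := by
  intro i j
  rw [Matrix.mul_diagonal, Matrix.diagonal_mul]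
  by_cases hi0 : i = ⟨0, hn⟩ <;> by_cases hj0 : j = ⟨0, hn⟩
  · rw [if_pos hi0, if_pos hj0]
    have := SetLike.mul_mem_graded (SetLike.mul_mem_graded ha (hA i j)) hb
    have hdeg : -δ + (-(γ i) + d + γ j) + δ = -(γ' i) + d + γ' j := by
      rw [hi0, hj0, h0]
      simp [neg_add_rev, add_assoc]
    rwa [hdeg] at this
  · rw [if_pos hi0, if_neg hj0]
    have := SetLike.mul_mem_graded (SetLike.mul_mem_graded ha (hA i j))
      (SetLike.one_mem_graded 𝒜)
    have hdeg : -δ + (-(γ i) + d + γ j) + 0 = -(γ' i) + d + γ' j := by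
      rw [hi0, h0, hi j hj0]
      simp [neg_add_rev, add_assoc]
    rwa [hdeg] at this
  · rw [if_neg hi0, if_pos hj0]
    have := SetLike.mul_mem_graded (SetLike.mul_mem_graded
      (SetLike.one_mem_graded 𝒜) (hA i j)) hb
    have hdeg : 0 + (-(γ i) + d + γ j) + δ = -(γ' i) + d + γ' j := by
      rw [hj0, h0, hi i hi0]
      simp [add_assoc]
    rwa [hdeg] at this
  · rw [if_neg hi0, if_neg hj0]
    rw [one_mul, mul_one]
    rw [hi i hi0, hi j hj0]
    exact hA i j

/-- Let `R` be a `Γ`-graded ring, `u ∈ 𝒜 δ` a unit of `R`, and `γ' : Fin n → Γ` the shift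
vector obtained from `γ` by replacing its first entry `γ 0` with `γ 0 + δ`.  Then there is a
ring automorphism `Φ` of the matrix ring carrying the grading of `Mₙ(R)(γ)` onto the grading
of `Mₙ(R)(γ')`, i.e. `Mₙ(R)(γ)` and `Mₙ(R)(γ')` are graded isomorphic. -/
theorem matrix_shift_by_homogeneous_unit_graded_iso
    {Γ R : Type*} [AddGroup Γ] [DecidableEq Γ] [Ring R]
    (𝒜 : Γ → AddSubgroup R) [GradedRing 𝒜]
    {n : ℕ} (hn : 1 ≤ n) (γ : Fin n → Γ) (δ : Γ) (u : R)
    (hu : u ∈ 𝒜 δ) (huunit : IsUnit u)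
    (γ' : Fin n → Γ) (h0 : γ' ⟨0, hn⟩ = γ ⟨0, hn⟩ + δ)
    (hi : ∀ i : Fin n, i ≠ ⟨0, hn⟩ → γ' i = γ i) :
    ∃ Φ : Matrix (Fin n) (Fin n) R ≃+* Matrix (Fin n) (Fin n) R,
      ∀ d : Γ, ∀ A : Matrix (Fin n) (Fin n) R,
        MatrixGradedHomogeneous 𝒜 γ d A ↔ MatrixGradedHomogeneous 𝒜 γ' d (Φ A) := by
  obtain ⟨U, hU⟩ := huunit
  set v : R := ((U⁻¹ : Rˣ) : R) with hvdef
  have huv : u * v = 1 := by rw [← hU, hvdef]; exact_mod_cast U.mul_inv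
  have hvu : v * u = 1 := by rw [← hU, hvdef]; exact_mod_cast U.inv_mul
  have hv : v ∈ 𝒜 (-δ) := inv_mem_of_homogeneous_unit 𝒜 hu huv hvu
  set D : Matrix (Fin n) (Fin n) R :=
    Matrix.diagonal (fun i => if i = ⟨0, hn⟩ then v else 1) with hD
  set E : Matrix (Fin n) (Fin n) R :=
    Matrix.diagonal (fun i => if i = ⟨0, hn⟩ then u else 1) with hE
  have hDE : D * E = 1 := by
    rw [hD, hE, Matrix.diagonal_mul_diagonal]
    convert Matrix.diagonal_one
    rename_i i
    by_cases h : i = ⟨0, hn⟩ <;> simp [h, hvu]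
  have hED : E * D = 1 := by
    rw [hD, hE, Matrix.diagonal_mul_diagonal]
    convert Matrix.diagonal_one
    rename_i i
    by_cases h : i = ⟨0, hn⟩ <;> simp [h, huv]
  refine ⟨{ toFun := fun A => D * A * E
            invFun := fun A => E * A * D
            left_inv := fun A => by
              calc E * (D * A * E) * D = (E * D) * A * (E * D) := by
                    simp only [Matrix.mul_assoc]
              _ = A := by rw [hED]; simp
            right_inv := fun A => by
              calc D * (E * A * D) * E = (D * E) * A * (D * E) := by
                    simp only [Matrix.mul_assoc]
              _ = A := by rw [hDE]; simp
            map_mul' := fun A B => by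
              calc D * (A * B) * E = (D * A) * (E * D) * (B * E) := by
                    rw [hED]; simp [Matrix.mul_assoc]
              _ = (D * A * E) * (D * B * E) := by simp only [Matrix.mul_assoc]
            map_add' := fun A B => by noncomm_ring }, ?_⟩
  intro d A
  constructor
  · intro hA
    exact aux_conj 𝒜 hn γ γ' δ v u hv hu h0 hi d A hA
  · intro hA
    have hA' : MatrixGradedHomogeneous 𝒜 γ' d (D * A * E) := hA
    have key := aux_conj 𝒜 hn γ' γ (-δ) u v (by rwa [neg_neg]) hv
      (by rw [h0, add_assoc, add_neg_cancel, add_zero])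
      (fun i h => (hi i h).symm) d (D * A * E) hA'
    have heq : Matrix.diagonal (fun i => if i = ⟨0, hn⟩ then u else (1:R)) *
        (D * A * E) * Matrix.diagonal (fun i => if i = ⟨0, hn⟩ then v else (1:R)) = A := by
      show E * (D * A * E) * D = A
      calc E * (D * A * E) * D = (E * D) * A * (E * D) := by simp only [Matrix.mul_assoc]
      _ = A := by rw [hED]; simp
    rwa [heq] at key
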